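/- Boethius' thesis is valid in sOL: for all x, y in O3, the value of (x → y) → ¬(x → ¬y) is designated (i.e., belongs to {½, 1}). -/

import Mathlib

inductive O3 : Type | zero | half | one
deriving DecidableEq

open O3

def oneg : O3 → O3
  | zero => one | one => zero | half => half

def oand : O3 → O3 → O3
  | half, half => half | half, one => one | half, zero => zero
  | one, half => one | one, one => one | one, zero => zero
  | zero, _ => zero

def oor : O3 → O3 → O3
  | half, half => half | half, one => one | half, zero => zero
  | one, _ => one
  | zero, half => zero | zero, one => one | zero, zero => zero

def oimp : O3 → O3 → O3
  | half, y => y | one, y => y | zero, _ => half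

/-- designated values -/
def desig (x : O3) : Prop := x = half ∨ x = one

/-- Kleene meet: minimum w.r.t. 0 < ½ < 1 -/
def kmeet : O3 → O3 → O3
  | zero, _ => zero | _, zero => zero
  | half, _ => half | _, half => half
  | one, one => one

/-- Kleene join: maximum w.r.t. 0 < ½ < 1 -/
def kjoin : O3 → O3 → O3
  | one, _ => one | _, one => one
  | half, _ => half | _, half => half
  | zero, zero => zero

/-- material implication ¬x ∨ y -/
def bimp (x y : O3) : O3 := oor (oneg x) y

theorem oneg_oneg (x : O3) : oneg (oneg x) = x := by
  cases x <;> rfl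

theorem oimp_of_desig {x : O3} (hx : desig x) (y : O3) : oimp x y = y := by
  rcases hx with rfl | rfl <;> rfl

theorem eq_zero_of_not_desig {x : O3} (hx : ¬desig x) : x = zero := by
  cases x <;> simp_all [desig]

theorem desig_oimp_self (y : O3) : desig (oimp y y) := by
  cases y <;> simp [desig, oimp]

theorem boethius_valid : ∀ x y : O3, desig (oimp (oimp x y) (oneg (oimp x (oneg y)))) := by
  intro x y
  by_cases hx : desig x
  · rw [oimp_of_desig hx, oimp_of_desig hx, oneg_oneg]
    exact desig_oimp_self y
  · -- from a false antecedent both inner implications are ½, and ¬½ = ½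
    rw [eq_zero_of_not_desig hx]
    exact Or.inl rfl
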